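/- arXiv:1310.8533 — 2 statements merged into one kernel-verified Lean document; each statement's English description precedes it below -/
import Mathlib

section
/- For integers k ≥ 2, l ≥ 1 and d ≥ 1, the algebraic connectivity satisfies α(T(k,l,d)) > α(T(k−1,l,d+1)). -/
/-- The algebraic connectivity of a graph: the second smallest Laplacian eigenvalue,
realized as the minimum of the Rayleigh quotient over unit vectors orthogonal to the
all-ones vector. -/
noncomputable def algConn {V : Type*} [Fintype V] [DecidableEq V] (G : SimpleGraph V) : ℝ :=
  letI := Classical.decRel G.Adj
  sInf { r : ℝ | ∃ x : V → ℝ, (∑ v, x v) = 0 ∧ (∑ v, (x v) ^ 2) = 1 ∧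
      r = dotProduct x ((G.lapMatrix ℝ).mulVec x) }

/-- A Fiedler vector: an eigenvector of the Laplacian matrix for the eigenvalue `algConn G`. -/
noncomputable def IsFiedlerVector {V : Type*} [Fintype V] [DecidableEq V]
    (G : SimpleGraph V) (x : V → ℝ) : Prop :=
  letI := Classical.decRel G.Adj
  x ≠ 0 ∧ (G.lapMatrix ℝ).mulVec x = algConn G • x

/-- The domination number: the minimum size of a set `S` of vertices such that every
vertex outside `S` has a neighbor in `S`. -/
noncomputable def dominationNumber {V : Type*} [Fintype V] (G : SimpleGraph V) : ℕ :=
  sInf { k : ℕ | ∃ S : Finset V, S.card = k ∧ ∀ v ∉ S, ∃ u ∈ S, G.Adj u v }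

/-- The tree `T(k,l,d)`: a path on `d` vertices `0, …, d-1` with `k` pendant vertices
attached at vertex `0` and `l` pendant vertices attached at vertex `d-1`. -/
def Tkld (k l d : ℕ) : SimpleGraph (Fin k ⊕ Fin d ⊕ Fin l) where
  Adj a b :=
    match a, b with
    | Sum.inl _, Sum.inr (Sum.inl j) => j.1 = 0
    | Sum.inr (Sum.inl j), Sum.inl _ => j.1 = 0
    | Sum.inr (Sum.inl i), Sum.inr (Sum.inl j) => i.1 + 1 = j.1 ∨ j.1 + 1 = i.1
    | Sum.inr (Sum.inl j), Sum.inr (Sum.inr _) => j.1 + 1 = d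
    | Sum.inr (Sum.inr _), Sum.inr (Sum.inl j) => j.1 + 1 = d
    | _, _ => False
  symm := by
    constructor
    rintro (a | b | c) (a' | b' | c') h <;> simp_all <;> tauto
  loopless := by
    constructor
    rintro (a | b | c) h <;> simp_all

/-- The coalescence `G₁(v) ◇ G₂(u)`: identify the vertex `v` of `G₁` with the vertex `u`
of `G₂` (the identified vertex is represented by `Sum.inl v`). -/
def coalesce {V₁ V₂ : Type*} (G₁ : SimpleGraph V₁) (G₂ : SimpleGraph V₂)
    (v : V₁) (u : V₂) : SimpleGraph (V₁ ⊕ {w : V₂ // w ≠ u}) where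
  Adj a b :=
    match a, b with
    | Sum.inl a, Sum.inl b => G₁.Adj a b
    | Sum.inl a, Sum.inr b => a = v ∧ G₂.Adj u b.1
    | Sum.inr a, Sum.inl b => b = v ∧ G₂.Adj u a.1
    | Sum.inr a, Sum.inr b => G₂.Adj a.1 b.1
  symm := by
    constructor
    rintro (a | a) (b | b) h <;> simp_all [SimpleGraph.adj_comm]
  loopless := by
    constructor
    rintro (a | a) h <;> simp_all

/-!
Let `x` be a Fiedler vector of `T(k,l,d)`, `d ≥ 2`, with eigenvalue `α < 1`. At a left pendant the
eigen-equation reads `(1 - α) x(pᵢ) = x(v₁)`, so `x` takes one value `a` on all left pendants and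
`a - x(v₁) = α a`. Declare one left pendant to be a new path vertex `v₀` and hang the other `k - 1`
from it: this is `T(k-1,l,d+1)` on the same vertex set, `x` keeps its sum and norm, and the
Laplacian form loses `(k - 1)(α a)²`. This is positive: if `α a = 0`, then `x - a` is an
eigenvector vanishing at `v₁`, which the eigen-equation propagates to zero along the tree, so `x`
is constant, hence zero. For `d = 1` the star has `α = 1`, and an explicit vector with Rayleigh
quotient `1`, constant on the left pendants, plays the role of `x`.
-/

open Finset Matrix

theorem Matrix.smul_dotProduct_mulVec_smul {n : Type*} [Fintype n] (M : Matrix n n ℝ) (c : ℝ)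
    (x : n → ℝ) : (c • x) ⬝ᵥ (M *ᵥ (c • x)) = c ^ 2 * (x ⬝ᵥ (M *ᵥ x)) := by
  simp only [mulVec_smul, smul_dotProduct, dotProduct_smul, smul_eq_mul]
  ring

theorem Matrix.IsSymm.dotProduct_mulVec_eq_zero_of_nonneg {n : Type*} [Fintype n]
    {M : Matrix n n ℝ} (hM : M.IsSymm) {x z : n → ℝ}
    (hnonneg : ∀ t : ℝ, 0 ≤ (x + t • z) ⬝ᵥ (M *ᵥ (x + t • z))) (hx : x ⬝ᵥ (M *ᵥ x) = 0) :
    z ⬝ᵥ (M *ᵥ x) = 0 := by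
  have hsymm : x ⬝ᵥ (M *ᵥ z) = z ⬝ᵥ (M *ᵥ x) := by
    rw [dotProduct_mulVec, ← mulVec_transpose, hM.eq, dotProduct_comm]
  have hquad : ∀ t : ℝ, 0 ≤ (z ⬝ᵥ (M *ᵥ z)) * (t * t) + 2 * (z ⬝ᵥ (M *ᵥ x)) * t + 0 := by
    intro t
    convert hnonneg t using 1
    simp only [mulVec_add, mulVec_smul, dotProduct_add, add_dotProduct, dotProduct_smul,
      smul_dotProduct, smul_eq_mul, hx, hsymm]
    ring
  have h := discrim_le_zero hquad
  rw [discrim] at h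
  nlinarith [sq_nonneg (z ⬝ᵥ (M *ᵥ x))]

namespace SimpleGraph

variable {V : Type*} [Fintype V] [DecidableEq V] (G : SimpleGraph V) [DecidableRel G.Adj]

theorem sum_lapMatrix_mulVec (x : V → ℝ) : ∑ v, (G.lapMatrix ℝ *ᵥ x) v = 0 := by
  have hone : ∑ v, (G.lapMatrix ℝ *ᵥ x) v = (fun _ ↦ 1) ⬝ᵥ (G.lapMatrix ℝ *ᵥ x) := by
    simp [dotProduct]
  rw [hone, dotProduct_mulVec, ← mulVec_transpose, (isSymm_lapMatrix (R := ℝ) G).eq,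
    lapMatrix_mulVec_const_eq_zero, zero_dotProduct]

theorem lapMatrix_mulVec_apply_of_adj_iff {v w : V} (h : ∀ u, G.Adj v u ↔ u = w)
    (x : V → ℝ) : (G.lapMatrix ℝ *ᵥ x) v = x v - x w := by
  have hN : G.neighborFinset v = {w} := by ext u; simp [h]
  simp [lapMatrix_mulVec_apply, ← card_neighborFinset_eq_degree, hN]

theorem apply_eq_zero_of_lapMatrix_mulVec_eq_smul {μ : ℝ} {x : V → ℝ}
    (hx : G.lapMatrix ℝ *ᵥ x = μ • x) {v w : V} (hvw : G.Adj v w) (hv : x v = 0)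
    (hothers : ∀ u, G.Adj v u → u ≠ w → x u = 0) : x w = 0 := by
  have h := congrFun hx v
  rw [lapMatrix_mulVec_apply, Pi.smul_apply, hv, smul_zero, mul_zero, zero_sub, neg_eq_zero,
    sum_eq_single_of_mem w ((mem_neighborFinset _ _ _).2 hvw)] at h
  · exact h
  · exact fun u hu huw ↦ hothers u ((mem_neighborFinset _ _ _).1 hu) huw

theorem dotProduct_lapMatrix_mulVec_eq_sum_parent (par : V → V)
    (hadj : ∀ a b, a ≠ b → (G.Adj a b ↔ par a = b ∨ par b = a))
    (hpar : ∀ a b, par a = b → par b = a → a = b) (x : V → ℝ) :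
    x ⬝ᵥ (G.lapMatrix ℝ *ᵥ x) = ∑ a, (x a - x (par a)) ^ 2 := by
  have hsplit : ∀ a b, (if G.Adj a b then (x a - x b) ^ 2 else 0) =
      (if par a = b then (x a - x b) ^ 2 else 0) + (if par b = a then (x a - x b) ^ 2 else 0) := by
    intro a b
    by_cases hab : a = b
    · simp [hab]
    have hA := hadj a b hab
    by_cases h₁ : par a = b <;> by_cases h₂ : par b = a
    · exact absurd (hpar a b h₁ h₂) hab
    all_goals simp [h₁, h₂, hA]
  have hback : ∑ a, ∑ b, (if par b = a then (x a - x b) ^ 2 else 0) =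
      ∑ b, (x b - x (par b)) ^ 2 := by
    rw [sum_comm]
    exact sum_congr rfl fun b _ ↦ by simp only [sum_ite_eq, mem_univ, if_true]; ring
  rw [← toLinearMap₂'_apply', lapMatrix_toLinearMap₂']
  simp only [hsplit, sum_add_distrib, sum_ite_eq, mem_univ, if_true, hback]
  ring

def rayleighValues : Set ℝ :=
  {r | ∃ x : V → ℝ, ∑ v, x v = 0 ∧ ∑ v, x v ^ 2 = 1 ∧ r = x ⬝ᵥ (G.lapMatrix ℝ *ᵥ x)}

theorem algConn_eq_sInf_rayleighValues : algConn G = sInf (rayleighValues G) := by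
  unfold algConn rayleighValues
  congr!

theorem bddBelow_rayleighValues : BddBelow (rayleighValues G) := by
  refine ⟨0, ?_⟩
  rintro r ⟨x, -, -, rfl⟩
  simpa using (G.posSemidef_lapMatrix ℝ).dotProduct_mulVec_nonneg x

theorem exists_sq_mul_mem_rayleighValues {x : V → ℝ} (hx : ∑ v, x v = 0) (hx0 : x ≠ 0) :
    ∃ c : ℝ, c ^ 2 * ∑ v, x v ^ 2 = 1 ∧
      c ^ 2 * (x ⬝ᵥ (G.lapMatrix ℝ *ᵥ x)) ∈ rayleighValues G := by
  have hN : 0 < ∑ v, x v ^ 2 := by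
    obtain ⟨v, hv⟩ : ∃ v, x v ≠ 0 := Function.ne_iff.1 hx0
    exact sum_pos' (fun u _ ↦ sq_nonneg (x u)) ⟨v, mem_univ v, by positivity⟩
  set c := (√(∑ v, x v ^ 2))⁻¹
  have hc : c ^ 2 * ∑ v, x v ^ 2 = 1 := by
    rw [inv_pow, Real.sq_sqrt hN.le, inv_mul_cancel₀ hN.ne']
  exact ⟨c, hc, c • x, by simp [← mul_sum, hx], by simp [mul_pow, ← mul_sum, hc],
    (smul_dotProduct_mulVec_smul _ c x).symm⟩

theorem algConn_mul_le {x : V → ℝ} (hx : ∑ v, x v = 0) :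
    algConn G * ∑ v, x v ^ 2 ≤ x ⬝ᵥ (G.lapMatrix ℝ *ᵥ x) := by
  rcases eq_or_ne x 0 with rfl | hx0
  · simp
  obtain ⟨c, hc, hmem⟩ := G.exists_sq_mul_mem_rayleighValues hx hx0
  have hle := algConn_eq_sInf_rayleighValues G ▸ csInf_le G.bddBelow_rayleighValues hmem
  calc algConn G * ∑ v, x v ^ 2
      ≤ c ^ 2 * (x ⬝ᵥ (G.lapMatrix ℝ *ᵥ x)) * ∑ v, x v ^ 2 := by gcongr
    _ = x ⬝ᵥ (G.lapMatrix ℝ *ᵥ x) := by rw [mul_right_comm, hc, one_mul]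

theorem exists_dotProduct_lapMatrix_mulVec_eq_algConn [Nontrivial V] :
    ∃ x : V → ℝ, ∑ v, x v = 0 ∧ ∑ v, x v ^ 2 = 1 ∧ x ⬝ᵥ (G.lapMatrix ℝ *ᵥ x) = algConn G := by
  set K : Set (V → ℝ) := {x | ∑ v, x v = 0 ∧ ∑ v, x v ^ 2 = 1}
  have hK : IsCompact K := by
    refine (isCompact_univ_pi fun _ ↦ isCompact_Icc (a := (-1 : ℝ)) (b := 1)).of_isClosed_subset
      ((isClosed_eq (by fun_prop) continuous_const).inter
        (isClosed_eq (by fun_prop) continuous_const)) ?_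
    rintro x ⟨-, hx⟩ v -
    rw [Set.mem_Icc, ← abs_le, ← sq_le_one_iff_abs_le_one, ← hx]
    exact single_le_sum (fun u _ ↦ sq_nonneg (x u)) (mem_univ v)
  have himage : rayleighValues G = (fun x ↦ x ⬝ᵥ (G.lapMatrix ℝ *ᵥ x)) '' K := by
    ext r
    constructor
    · rintro ⟨x, h0, h1, rfl⟩
      exact ⟨x, ⟨h0, h1⟩, rfl⟩
    · rintro ⟨x, ⟨h0, h1⟩, rfl⟩
      exact ⟨x, h0, h1, rfl⟩
  have hne : (rayleighValues G).Nonempty := by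
    obtain ⟨u, w, huw⟩ := exists_pair_ne V
    have hsum : ∑ v, (Pi.single u 1 - Pi.single w 1 : V → ℝ) v = 0 := by simp
    have hx0 : (Pi.single u 1 - Pi.single w 1 : V → ℝ) ≠ 0 := by
      intro h
      simpa [huw] using congrFun h u
    obtain ⟨c, -, hmem⟩ := G.exists_sq_mul_mem_rayleighValues hsum hx0
    exact ⟨_, hmem⟩
  have hmem := (himage ▸ hK.image (by fun_prop)).sInf_mem hne
  rw [← algConn_eq_sInf_rayleighValues] at hmem
  obtain ⟨x, h0, h1, hx⟩ := hmem
  exact ⟨x, h0, h1, hx.symm⟩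

theorem le_algConn [Nontrivial V] {c : ℝ}
    (h : ∀ x : V → ℝ, ∑ v, x v = 0 → c * ∑ v, x v ^ 2 ≤ x ⬝ᵥ (G.lapMatrix ℝ *ᵥ x)) :
    c ≤ algConn G := by
  obtain ⟨x, h0, h1, hx⟩ := G.exists_dotProduct_lapMatrix_mulVec_eq_algConn
  simpa [h1, hx] using h x h0

/- The form of `M = L - α` is nonnegative on the sum-zero hyperplane and vanishes at `x`, so `M x`
is orthogonal to that hyperplane; but `M x` lies in it. -/
theorem lapMatrix_mulVec_eq_algConn_smul {x : V → ℝ} (hx : ∑ v, x v = 0)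
    (hmin : x ⬝ᵥ (G.lapMatrix ℝ *ᵥ x) = algConn G * ∑ v, x v ^ 2) :
    G.lapMatrix ℝ *ᵥ x = algConn G • x := by
  set μ := algConn G
  set M := G.lapMatrix ℝ - μ • (1 : Matrix V V ℝ)
  have hM : ∀ y, y ⬝ᵥ (M *ᵥ y) = y ⬝ᵥ (G.lapMatrix ℝ *ᵥ y) - μ * ∑ v, y v ^ 2 := by
    intro y
    simp [M, sub_mulVec, smul_mulVec, dotProduct, sq, mul_sub, sum_sub_distrib, mul_sum,
      mul_left_comm]
  have hMx : ∑ v, (M *ᵥ x) v = 0 := by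
    simp [M, sub_mulVec, smul_mulVec, sum_sub_distrib, ← mul_sum, hx, sum_lapMatrix_mulVec]
  have hsymm : M.IsSymm := (isSymm_lapMatrix (R := ℝ) G).sub (isSymm_one.smul μ)
  have horth := hsymm.dotProduct_mulVec_eq_zero_of_nonneg (x := x) (z := M *ᵥ x)
    (fun t ↦ by
      rw [hM, sub_nonneg]
      exact G.algConn_mul_le (by simp [sum_add_distrib, ← mul_sum, hx, hMx]))
    (by rw [hM, hmin, sub_self])
  have hzero : M *ᵥ x = 0 := dotProduct_self_eq_zero.1 horth
  simpa [M, sub_mulVec, smul_mulVec, sub_eq_zero] using hzero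

end SimpleGraph

namespace Tkld

variable {k l e : ℕ}

/- Each vertex goes to its neighbour towards `v₁ = .inr (.inl 0)`, which is fixed
(`0 - 1 = 0` in `ℕ`). -/
def parent : Fin k ⊕ Fin (e + 1) ⊕ Fin l → Fin k ⊕ Fin (e + 1) ⊕ Fin l
  | .inl _ => .inr (.inl 0)
  | .inr (.inl j) => .inr (.inl ⟨j - 1, by omega⟩)
  | .inr (.inr _) => .inr (.inl (Fin.last e))

theorem adj_iff_parent (a b : Fin k ⊕ Fin (e + 1) ⊕ Fin l) (hab : a ≠ b) :
    (Tkld k l (e + 1)).Adj a b ↔ parent a = b ∨ parent b = a := by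
  rcases a with i | j | q <;> rcases b with i' | j' | q' <;> dsimp only [Tkld, parent] <;>
    simp at hab ⊢ <;> simp only [Fin.ext_iff, Fin.val_last] at hab ⊢ <;> omega

theorem eq_of_parent_eq_of_parent_eq (a b : Fin k ⊕ Fin (e + 1) ⊕ Fin l) (h₁ : parent a = b)
    (h₂ : parent b = a) : a = b := by
  rcases a with i | j | q <;> rcases b with i' | j' | q' <;> simp [parent] at h₁ h₂ ⊢
  simp only [Fin.ext_iff] at h₁ h₂ ⊢
  omega

theorem adj_inl_iff (i : Fin k) (u : Fin k ⊕ Fin (e + 1) ⊕ Fin l) :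
    (Tkld k l (e + 1)).Adj (.inl i) u ↔ u = .inr (.inl 0) := by
  rcases u with i' | j' | q' <;> dsimp only [Tkld] <;> simp

theorem adj_inr_inr_iff (q : Fin l) (u : Fin k ⊕ Fin (e + 1) ⊕ Fin l) :
    (Tkld k l (e + 1)).Adj (.inr (.inr q)) u ↔ u = .inr (.inl (Fin.last e)) := by
  rcases u with i' | j' | q' <;> dsimp only [Tkld] <;> simp
  simp [Fin.ext_iff]

theorem dotProduct_lapMatrix_mulVec [DecidableRel (Tkld k l (e + 1)).Adj]
    (x : Fin k ⊕ Fin (e + 1) ⊕ Fin l → ℝ) :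
    x ⬝ᵥ ((Tkld k l (e + 1)).lapMatrix ℝ *ᵥ x) =
      ∑ i, (x (.inl i) - x (.inr (.inl 0))) ^ 2 +
      ∑ j : Fin e, (x (.inr (.inl j.succ)) - x (.inr (.inl j.castSucc))) ^ 2 +
      ∑ q, (x (.inr (.inr q)) - x (.inr (.inl (Fin.last e)))) ^ 2 := by
  rw [SimpleGraph.dotProduct_lapMatrix_mulVec_eq_sum_parent _ parent adj_iff_parent
    eq_of_parent_eq_of_parent_eq, Fintype.sum_sum_type, Fintype.sum_sum_type, Fin.sum_univ_succ]
  simp [parent, add_assoc]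
  rfl

theorem eq_zero_of_lapMatrix_mulVec_eq_smul [DecidableRel (Tkld k l (e + 1)).Adj] {μ : ℝ}
    (hμ : μ ≠ 1) {x : Fin k ⊕ Fin (e + 1) ⊕ Fin l → ℝ}
    (hx : (Tkld k l (e + 1)).lapMatrix ℝ *ᵥ x = μ • x) (h0 : x (.inr (.inl 0)) = 0) : x = 0 := by
  have hpendant : ∀ {v w}, (∀ u, (Tkld k l (e + 1)).Adj v u ↔ u = w) → x w = 0 → x v = 0 := by
    intro v w hvw hw
    have h := congrFun hx v
    rw [SimpleGraph.lapMatrix_mulVec_apply_of_adj_iff _ hvw, hw, Pi.smul_apply, smul_eq_mul] at h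
    have h' : (1 - μ) * x v = 0 := by linarith
    exact (mul_eq_zero.1 h').resolve_left (sub_ne_zero.2 hμ.symm)
  have hpath : ∀ m (hm : m < e + 1), x (.inr (.inl ⟨m, hm⟩)) = 0 := by
    intro m
    induction m using Nat.strong_induction_on with
    | _ m ih =>
      intro hm
      rcases m with _ | m
      · exact h0
      refine SimpleGraph.apply_eq_zero_of_lapMatrix_mulVec_eq_smul _ hx
        (v := .inr (.inl ⟨m, by omega⟩)) (Or.inl rfl) (ih m (by omega) _) ?_
      rintro (i | ⟨j, hj⟩ | q) hadj hne
      · exact hpendant (adj_inl_iff i) h0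
      · dsimp only [Tkld] at hadj
        have hjm : j ≠ m + 1 := by rintro rfl; exact hne rfl
        exact ih j (by omega) hj
      · dsimp only [Tkld] at hadj
        omega
  funext v
  rcases v with i | j | q
  · exact hpendant (adj_inl_iff i) h0
  · exact hpath j j.2
  · exact hpendant (adj_inr_inr_iff q) (hpath e (by omega))

/- `T(k,l,d+1)` is `T(k+1,l,d)` with the left pendant `0` made the new first path vertex and the
other left pendants moved onto it; `transplant x` reads `x` along this relabelling. -/
def transplant {d : ℕ} (x : Fin (k + 1) ⊕ Fin d ⊕ Fin l → ℝ) : Fin k ⊕ Fin (d + 1) ⊕ Fin l → ℝ :=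
  Sum.elim (fun i ↦ x (.inl i.succ))
    (Sum.elim (Fin.cons (x (.inl 0)) fun j ↦ x (.inr (.inl j))) fun q ↦ x (.inr (.inr q)))

theorem sum_comp_transplant {d : ℕ} (x : Fin (k + 1) ⊕ Fin d ⊕ Fin l → ℝ) (f : ℝ → ℝ) :
    ∑ v, f (transplant x v) = ∑ v, f (x v) := by
  simp [transplant, Fintype.sum_sum_type, Fin.sum_univ_succ]
  ring

theorem dotProduct_lapMatrix_mulVec_transplant [DecidableRel (Tkld k l (e + 2)).Adj]
    [DecidableRel (Tkld (k + 1) l (e + 1)).Adj] (x : Fin (k + 1) ⊕ Fin (e + 1) ⊕ Fin l → ℝ) :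
    transplant x ⬝ᵥ ((Tkld k l (e + 2)).lapMatrix ℝ *ᵥ transplant x) =
      x ⬝ᵥ ((Tkld (k + 1) l (e + 1)).lapMatrix ℝ *ᵥ x) + ∑ i : Fin k,
        ((x (.inl i.succ) - x (.inl 0)) ^ 2 - (x (.inl i.succ) - x (.inr (.inl 0))) ^ 2) := by
  rw [dotProduct_lapMatrix_mulVec, dotProduct_lapMatrix_mulVec]
  simp [transplant, Fin.sum_univ_succ, sum_sub_distrib]
  ring

theorem algConn_lt_of_const_on_left_pendants [DecidableRel (Tkld (k + 1) l (e + 1)).Adj]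
    (hk : 1 ≤ k) {x : Fin (k + 1) ⊕ Fin (e + 1) ⊕ Fin l → ℝ} (hx : ∑ v, x v = 0)
    (hconst : ∀ i, x (.inl i) = x (.inl 0)) (hjump : x (.inl 0) ≠ x (.inr (.inl 0)))
    (hmin : x ⬝ᵥ ((Tkld (k + 1) l (e + 1)).lapMatrix ℝ *ᵥ x) ≤
      algConn (Tkld (k + 1) l (e + 1)) * ∑ v, x v ^ 2) :
    algConn (Tkld k l (e + 2)) < algConn (Tkld (k + 1) l (e + 1)) := by
  classical
  have hle := (Tkld k l (e + 2)).algConn_mul_le (x := transplant x)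
    ((sum_comp_transplant x id).trans hx)
  rw [sum_comp_transplant x (· ^ 2), dotProduct_lapMatrix_mulVec_transplant] at hle
  simp only [hconst, sub_self, zero_pow two_ne_zero, zero_sub, sum_const, card_univ,
    Fintype.card_fin, nsmul_eq_mul] at hle
  have hgap : 0 < (k : ℝ) * (x (.inl 0) - x (.inr (.inl 0))) ^ 2 := by
    have := sub_ne_zero.2 hjump
    have : (0 : ℝ) < k := by exact_mod_cast hk
    positivity
  refine lt_of_mul_lt_mul_right (a := ∑ v, x v ^ 2) ?_ (sum_nonneg fun v _ ↦ sq_nonneg (x v))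
  linarith

theorem one_le_algConn_star : 1 ≤ algConn (Tkld (k + 1) l 1) := by
  classical
  have : Nontrivial (Fin (k + 1) ⊕ Fin 1 ⊕ Fin l) := ⟨⟨.inl 0, .inr (.inl 0), Sum.inl_ne_inr⟩⟩
  refine SimpleGraph.le_algConn _ fun x hx ↦ ?_
  rw [dotProduct_lapMatrix_mulVec (e := 0)]
  simp only [Fintype.sum_sum_type, Fin.sum_univ_one, univ_eq_empty, sum_empty, add_zero,
    Fin.last_zero] at hx ⊢
  set c := x (.inr (.inl 0))
  have hleft : ∑ i, x (.inl i) ^ 2 - 2 * c * ∑ i, x (.inl i) ≤ ∑ i, (x (.inl i) - c) ^ 2 := by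
    rw [mul_sum, ← sum_sub_distrib]
    gcongr with i
    nlinarith [sq_nonneg c]
  have hright : ∑ q, x (.inr (.inr q)) ^ 2 - 2 * c * ∑ q, x (.inr (.inr q)) ≤
      ∑ q, (x (.inr (.inr q)) - c) ^ 2 := by
    rw [mul_sum, ← sum_sub_distrib]
    gcongr with q
    nlinarith [sq_nonneg c]
  have hcross : 2 * c * ∑ i, x (.inl i) + 2 * c * ∑ q, x (.inr (.inr q)) = -2 * c ^ 2 := by
    rw [← mul_add, show ∑ i, x (.inl i) + ∑ q, x (.inr (.inr q)) = -c by linarith]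
    ring
  linarith [sq_nonneg c]

theorem algConn_two_lt_algConn_star (hk : 1 ≤ k) (hl : 1 ≤ l) :
    algConn (Tkld k l 2) < algConn (Tkld (k + 1) l 1) := by
  classical
  set x : Fin (k + 1) ⊕ Fin 1 ⊕ Fin l → ℝ :=
    Sum.elim (fun _ ↦ (l : ℝ)) (Sum.elim (fun _ ↦ 0) fun _ ↦ -((k : ℝ) + 1))
  have hQ : x ⬝ᵥ ((Tkld (k + 1) l 1).lapMatrix ℝ *ᵥ x) = ∑ v, x v ^ 2 := by
    rw [dotProduct_lapMatrix_mulVec (e := 0)]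
    simp [x, Fintype.sum_sum_type]
  refine algConn_lt_of_const_on_left_pendants (e := 0) hk (x := x) ?_ (fun _ ↦ rfl) ?_ ?_
  · simp [x, Fintype.sum_sum_type]
    ring
  · simp [x]
    omega
  · rw [hQ]
    exact le_mul_of_one_le_left (sum_nonneg fun v _ ↦ sq_nonneg (x v)) one_le_algConn_star

theorem algConn_lt_one (hk : 1 ≤ k) (hl : 1 ≤ l) : algConn (Tkld (k + 1) l (e + 2)) < 1 := by
  classical
  set m : ℝ := e + 1 + l
  set K : ℝ := k + 2
  -- only the edge `v₁v₂` contributes to the form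
  set z : Fin (k + 1) ⊕ Fin (e + 2) ⊕ Fin l → ℝ :=
    Sum.elim (fun _ ↦ m) (Sum.elim (Fin.cons m fun _ ↦ -K) fun _ ↦ -K)
  have hz : ∑ v, z v = 0 := by
    simp [z, Fintype.sum_sum_type, Fin.sum_cons, m, K]
    ring
  have hzz : ∑ v, z v ^ 2 = K * m ^ 2 + m * K ^ 2 := by
    simp [z, Fintype.sum_sum_type, Fin.sum_univ_succ, m, K]
    ring
  have hQ : z ⬝ᵥ ((Tkld (k + 1) l (e + 2)).lapMatrix ℝ *ᵥ z) = (K + m) ^ 2 := by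
    rw [dotProduct_lapMatrix_mulVec]
    simp [z, Fin.sum_univ_succ]
    ring
  have hle := (Tkld (k + 1) l (e + 2)).algConn_mul_le hz
  rw [hzz, hQ] at hle
  have hm : 2 ≤ m := by simp only [m]; norm_cast; omega
  have hK : 3 ≤ K := by simp only [K]; norm_cast; omega
  have hgap : (K + m) ^ 2 < K * m ^ 2 + m * K ^ 2 := by
    nlinarith [mul_le_mul hK hm (by norm_num) (by linarith)]
  by_contra! h
  nlinarith [mul_le_mul_of_nonneg_right h (by positivity : 0 ≤ K * m ^ 2 + m * K ^ 2)]

theorem algConn_add_three_lt_algConn_add_two (hk : 1 ≤ k) (hl : 1 ≤ l) :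
    algConn (Tkld k l (e + 3)) < algConn (Tkld (k + 1) l (e + 2)) := by
  classical
  set G := Tkld (k + 1) l (e + 2)
  set μ := algConn G
  have : Nontrivial (Fin (k + 1) ⊕ Fin (e + 2) ⊕ Fin l) :=
    ⟨⟨.inl 0, .inr (.inl 0), Sum.inl_ne_inr⟩⟩
  obtain ⟨x, hx, hx1, hQ⟩ := G.exists_dotProduct_lapMatrix_mulVec_eq_algConn
  have hmin : x ⬝ᵥ (G.lapMatrix ℝ *ᵥ x) = μ * ∑ v, x v ^ 2 := by rw [hQ, hx1, mul_one]
  have heig : G.lapMatrix ℝ *ᵥ x = μ • x := G.lapMatrix_mulVec_eq_algConn_smul hx hmin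
  have hμ : μ < 1 := algConn_lt_one hk hl
  have hpendant : ∀ i, (1 - μ) * x (.inl i) = x (.inr (.inl 0)) := by
    intro i
    have h := congrFun heig (.inl i)
    rw [G.lapMatrix_mulVec_apply_of_adj_iff (adj_inl_iff i), Pi.smul_apply, smul_eq_mul] at h
    linarith
  have hconst : ∀ i, x (.inl i) = x (.inl 0) := fun i ↦
    mul_left_cancel₀ (sub_ne_zero.2 hμ.ne') ((hpendant i).trans (hpendant 0).symm)
  refine algConn_lt_of_const_on_left_pendants hk hx hconst ?_ hmin.le
  intro hjump
  set a := x (.inr (.inl 0))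
  have hμa : μ * a = 0 := by
    have h := hpendant 0
    rw [hjump] at h
    linear_combination -h
  have hshift : G.lapMatrix ℝ *ᵥ (x - a • fun _ ↦ 1) = μ • (x - a • fun _ ↦ 1) := by
    rw [mulVec_sub, mulVec_smul, G.lapMatrix_mulVec_const_eq_zero, heig, smul_zero, sub_zero]
    ext v
    simp only [Pi.smul_apply, Pi.sub_apply, smul_eq_mul, mul_one]
    linear_combination hμa
  have hxa : x = a • fun _ ↦ 1 :=
    sub_eq_zero.1 (eq_zero_of_lapMatrix_mulVec_eq_smul hμ.ne hshift (by simp [a]))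
  have ha : a = 0 := by
    simp only [hxa, Pi.smul_apply, smul_eq_mul, mul_one, sum_const, card_univ, nsmul_eq_mul] at hx
    exact (mul_eq_zero.1 hx).resolve_left (Nat.cast_ne_zero.2 Fintype.card_ne_zero)
  simp [hxa, ha] at hx1

end Tkld

/-- for `k ≥ 2`, `l ≥ 1`, `d ≥ 1`, `α(T(k,l,d)) > α(T(k−1,l,d+1))`. -/
theorem algConn_Tkld_gt_left (k l d : ℕ) (hk : 2 ≤ k) (hl : 1 ≤ l) (hd : 1 ≤ d) :
    algConn (Tkld k l d) > algConn (Tkld (k - 1) l (d + 1)) := by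
  obtain ⟨k, rfl⟩ : ∃ k', k = k' + 1 := ⟨k - 1, by omega⟩
  obtain ⟨e, rfl⟩ : ∃ e, d = e + 1 := ⟨d - 1, by omega⟩
  rw [Nat.add_sub_cancel]
  rcases e with _ | e
  · exact Tkld.algConn_two_lt_algConn_star (by omega) hl
  · exact Tkld.algConn_add_three_lt_algConn_add_two (by omega) hl
end

section
/- Let G be a connected graph of order n ≥ 3 with domination number γ(G) = 1. Then α(G) ≥ 1, with equality if and only if G has a cut vertex that is adjacent to all other vertices of G. -/
/-! If `v` is adjacent to all other vertices and `∑ x = 0`, `∑ x² = 1`, the Laplacian form splits as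
`xᵀ L x = ∑ᵤ (x v - x u)² + xᵀ L' x = n (x v)² + 1 + xᵀ L' x`, with `L'` the Laplacian of `G - v`;
hence `α(G) ≥ 1`. A minimiser with value `1` vanishes at `v` and is constant on the components of
`G - v`, which forces it to be `0` when `G - v` is connected. Conversely, when `G - v` is
disconnected, a vector that vanishes at `v`, is constant on the components of `G - v` and has sum
`0` has Rayleigh quotient at most `1`. -/

open Finset Matrix

def sumZeroSphere (V : Type*) [Fintype V] : Set (V → ℝ) :=
  {x | ∑ v, x v = 0 ∧ ∑ v, x v ^ 2 = 1}

section SumZeroSphere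

variable {V : Type*} [Fintype V]

theorem isCompact_sumZeroSphere : IsCompact (sumZeroSphere V) := by
  have hclosed : IsClosed (sumZeroSphere V) :=
    (isClosed_eq (by fun_prop) continuous_const).inter (isClosed_eq (by fun_prop) continuous_const)
  refine (isCompact_univ_pi fun _ => isCompact_Icc (a := (-1 : ℝ)) (b := 1)).of_isClosed_subset
    hclosed fun x hx v _ => ?_
  have : x v ^ 2 ≤ 1 :=
    hx.2 ▸ single_le_sum (f := fun u => x u ^ 2) (fun _ _ => sq_nonneg _) (mem_univ v)
  exact abs_le.mp ((sq_le_one_iff_abs_le_one _).mp this)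

theorem sum_sq_pos_of_ne_zero {y : V → ℝ} (hy : y ≠ 0) : 0 < ∑ v, y v ^ 2 := by
  obtain ⟨v, hv⟩ := Function.ne_iff.mp hy
  exact sum_pos' (fun _ _ => sq_nonneg _) ⟨v, mem_univ v, pow_two_pos_of_ne_zero hv⟩

theorem inv_sqrt_smul_mem_sumZeroSphere {y : V → ℝ} (h0 : ∑ v, y v = 0) (hy : y ≠ 0) :
    (√(∑ v, y v ^ 2))⁻¹ • y ∈ sumZeroSphere V := by
  have hpos := sum_sq_pos_of_ne_zero hy
  refine ⟨by simp [← mul_sum, h0], ?_⟩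
  simp only [Pi.smul_apply, smul_eq_mul, mul_pow, ← mul_sum, inv_pow, Real.sq_sqrt hpos.le]
  exact inv_mul_cancel₀ hpos.ne'

theorem sumZeroSphere_nonempty [Nontrivial V] : (sumZeroSphere V).Nonempty := by
  classical
  obtain ⟨a, b, hab⟩ := exists_pair_ne V
  refine ⟨_, inv_sqrt_smul_mem_sumZeroSphere (y := Pi.single a 1 - Pi.single b 1) ?_ ?_⟩
  · simp [sum_sub_distrib]
  · exact Function.ne_iff.mpr ⟨a, by simp [hab]⟩

theorem sum_sub_sq_eq_of_sum_eq_zero {x : V → ℝ} (h0 : ∑ u, x u = 0) (v : V) :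
    ∑ u, (x v - x u) ^ 2 = Fintype.card V * x v ^ 2 + ∑ u, x u ^ 2 := by
  simp only [sub_sq, sum_add_distrib, sum_sub_distrib, sum_const, card_univ, nsmul_eq_mul,
    ← mul_sum, h0]
  ring

end SumZeroSphere

section AlgConn

variable {V : Type*} [Fintype V] [DecidableEq V] (G : SimpleGraph V) [DecidableRel G.Adj]

theorem algConn_eq_sInf_image :
    algConn G = sInf ((fun x => toLinearMap₂' ℝ (G.lapMatrix ℝ) x x) '' sumZeroSphere V) := by
  unfold algConn
  congr 1
  ext r
  simp only [toLinearMap₂'_apply', Set.mem_image, sumZeroSphere, Set.mem_ofPred_eq,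
    eq_comm (a := r), and_assoc]
  congr!

theorem algConn_le_of_mem_sumZeroSphere {x : V → ℝ} (hx : x ∈ sumZeroSphere V) :
    algConn G ≤ toLinearMap₂' ℝ (G.lapMatrix ℝ) x x := by
  rw [algConn_eq_sInf_image]
  exact csInf_le (isCompact_sumZeroSphere.image (by fun_prop)).bddBelow ⟨x, hx, rfl⟩

theorem algConn_le_div_sum_sq {y : V → ℝ} (h0 : ∑ v, y v = 0) (hy : y ≠ 0) :
    algConn G ≤ toLinearMap₂' ℝ (G.lapMatrix ℝ) y y / ∑ v, y v ^ 2 := by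
  refine (algConn_le_of_mem_sumZeroSphere G (inv_sqrt_smul_mem_sumZeroSphere h0 hy)).trans_eq ?_
  rw [LinearMap.map_smul₂, LinearMap.map_smul, smul_eq_mul, smul_eq_mul, ← mul_assoc, ← sq,
    inv_pow, Real.sq_sqrt (sum_nonneg fun _ _ => sq_nonneg _), inv_mul_eq_div]

theorem le_algConn_of_forall [Nontrivial V] {c : ℝ}
    (h : ∀ x ∈ sumZeroSphere V, c ≤ toLinearMap₂' ℝ (G.lapMatrix ℝ) x x) : c ≤ algConn G := by
  rw [algConn_eq_sInf_image]
  exact le_csInf (sumZeroSphere_nonempty.image _) (Set.forall_mem_image.mpr h)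

theorem exists_mem_sumZeroSphere_eq_algConn [Nontrivial V] :
    ∃ x ∈ sumZeroSphere V, toLinearMap₂' ℝ (G.lapMatrix ℝ) x x = algConn G := by
  rw [algConn_eq_sInf_image]
  exact (isCompact_sumZeroSphere.image (by fun_prop)).sInf_mem (sumZeroSphere_nonempty.image _)

end AlgConn

namespace SimpleGraph

variable {V : Type*} [Fintype V] [DecidableEq V] (G : SimpleGraph V) [DecidableRel G.Adj]

theorem lapMatrix_toLinearMap₂'_eq_add_induce_ne (v : V) (x : V → ℝ) :
    toLinearMap₂' ℝ (G.lapMatrix ℝ) x x =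
      ∑ u ∈ G.neighborFinset v, (x v - x u) ^ 2 +
        toLinearMap₂' ℝ ((G.induce {u | u ≠ v}).lapMatrix ℝ) (fun u => x u) (fun u => x u) := by
  set f : V → V → ℝ := fun i j => if G.Adj i j then (x i - x j) ^ 2 else 0
  have hsymm (i j : V) : f i j = f j i := by
    simp only [f, G.adj_comm i j]
    split_ifs <;> ring
  have hsplit : ∑ i, ∑ j, f i j =
      ∑ j, f v j + ∑ i : {i // i ≠ v}, (f i v + ∑ j : {j // j ≠ v}, f i j) := by
    rw [Fintype.sum_eq_add_sum_subtype_ne _ v]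
    exact congrArg _ (sum_congr rfl fun i _ => Fintype.sum_eq_add_sum_subtype_ne _ v)
  have hcol : ∑ i : {i // i ≠ v}, f i v = ∑ j, f v j := by
    simp only [hsymm _ v]
    rw [Fintype.sum_eq_add_sum_subtype_ne (f v) v]
    simp [f]
  have hrow : ∑ j, f v j = ∑ u ∈ G.neighborFinset v, (x v - x u) ^ 2 := by
    rw [neighborFinset_eq_filter, sum_filter]
  rw [lapMatrix_toLinearMap₂', lapMatrix_toLinearMap₂']
  change (∑ i, ∑ j, f i j) / 2 =
    _ + (∑ i : {i // i ≠ v}, ∑ j : {j // j ≠ v}, f i j) / 2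
  rw [hsplit, sum_add_distrib, hcol, hrow]
  ring

theorem lapMatrix_toLinearMap₂'_nonneg (x : V → ℝ) : 0 ≤ toLinearMap₂' ℝ (G.lapMatrix ℝ) x x := by
  rw [lapMatrix_toLinearMap₂']
  positivity

theorem exists_lapMatrix_toLinearMap₂'_eq_zero_of_not_preconnected (h : ¬ G.Preconnected) :
    ∃ z : V → ℝ, z ≠ 0 ∧ ∑ u, z u = 0 ∧ toLinearMap₂' ℝ (G.lapMatrix ℝ) z z = 0 := by
  obtain ⟨a, b, hab⟩ : ∃ a b, ¬ G.Reachable a b := by simpa [Preconnected] using h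
  set p : ℝ := ↑(#(univ.filter (G.Reachable a)))
  set q : ℝ := ↑(#(univ.filter fun u => ¬ G.Reachable a u))
  have hq : 0 < q := by
    simp only [q, Nat.cast_pos, card_pos]
    exact ⟨b, by simpa using hab⟩
  refine ⟨fun u => if G.Reachable a u then q else -p, Function.ne_iff.mpr ⟨a, ?_⟩, ?_, ?_⟩
  · simpa using hq.ne'
  · rw [sum_ite, sum_const, sum_const, nsmul_eq_mul, nsmul_eq_mul]
    ring
  · rw [lapMatrix_toLinearMap₂'_apply'_eq_zero_iff_forall_reachable]
    intro i j hij
    have hreach : G.Reachable a i ↔ G.Reachable a j := ⟨(·.trans hij), (·.trans hij.symm)⟩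
    simp only [hreach]

theorem algConn_le_one_of_not_connected_induce [Nontrivial V] (v : V)
    (h : ¬ (G.induce {u | u ≠ v}).Connected) : algConn G ≤ 1 := by
  obtain ⟨w, hw⟩ := exists_ne v
  have : Nonempty ({u | u ≠ v} : Set V) := ⟨⟨w, hw⟩⟩
  obtain ⟨z, hz, hz0, hQz⟩ :=
    exists_lapMatrix_toLinearMap₂'_eq_zero_of_not_preconnected _ fun hpre => h ⟨hpre⟩
  set y : V → ℝ := fun u => if hu : u = v then 0 else z ⟨u, hu⟩
  have hyz : (fun u : ({u | u ≠ v} : Set V) => y u) = z := funext fun u => dif_neg u.2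
  have hyv : y v = 0 := dif_pos rfl
  have hy0 : ∑ u, y u = 0 := by
    rw [Fintype.sum_eq_add_sum_subtype_ne _ v, hyv, zero_add, ← hz0]
    exact sum_congr rfl fun u _ => dif_neg u.2
  have hy : y ≠ 0 := fun hy => hz (by rw [← hyz, hy]; rfl)
  have hpos := sum_sq_pos_of_ne_zero hy
  refine (algConn_le_div_sum_sq G hy0 hy).trans ((div_le_one hpos).mpr ?_)
  rw [lapMatrix_toLinearMap₂'_eq_add_induce_ne G v, hyz, hQz, add_zero]
  calc ∑ u ∈ G.neighborFinset v, (y v - y u) ^ 2 = ∑ u ∈ G.neighborFinset v, y u ^ 2 := by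
        simp only [hyv, zero_sub, neg_sq]
    _ ≤ ∑ u, y u ^ 2 := sum_le_sum_of_subset_of_nonneg (subset_univ _) fun _ _ _ => sq_nonneg _

variable {G} {v : V}

theorem neighborFinset_eq_univ_erase (hv : ∀ u, u ≠ v → G.Adj v u) :
    G.neighborFinset v = univ.erase v := by
  ext u
  simpa using ⟨fun h => h.ne', hv u⟩

theorem lapMatrix_toLinearMap₂'_eq_of_forall_adj (hv : ∀ u, u ≠ v → G.Adj v u) {x : V → ℝ}
    (hx : x ∈ sumZeroSphere V) :
    toLinearMap₂' ℝ (G.lapMatrix ℝ) x x = Fintype.card V * x v ^ 2 + 1 +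
      toLinearMap₂' ℝ ((G.induce {u | u ≠ v}).lapMatrix ℝ) (fun u => x u) (fun u => x u) := by
  rw [lapMatrix_toLinearMap₂'_eq_add_induce_ne G v, neighborFinset_eq_univ_erase hv,
    sum_erase _ (by simp), sum_sub_sq_eq_of_sum_eq_zero hx.1, hx.2]

theorem one_le_algConn_of_forall_adj [Nontrivial V] (hv : ∀ u, u ≠ v → G.Adj v u) :
    1 ≤ algConn G :=
  le_algConn_of_forall G fun x hx => by
    rw [lapMatrix_toLinearMap₂'_eq_of_forall_adj hv hx]
    have := lapMatrix_toLinearMap₂'_nonneg (G.induce {u | u ≠ v}) fun u => x u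
    have : 0 ≤ Fintype.card V * x v ^ 2 := by positivity
    linarith

theorem one_lt_algConn_of_forall_adj [Nontrivial V] (hv : ∀ u, u ≠ v → G.Adj v u)
    (hconn : (G.induce {u | u ≠ v}).Connected) : 1 < algConn G := by
  obtain ⟨x, hx, hxeq⟩ := exists_mem_sumZeroSphere_eq_algConn G
  rw [← hxeq, lapMatrix_toLinearMap₂'_eq_of_forall_adj hv hx]
  by_contra! hle
  have hQ' := lapMatrix_toLinearMap₂'_nonneg (G.induce {u | u ≠ v}) fun u => x u
  have hcard : (0 : ℝ) < Fintype.card V := by exact_mod_cast Fintype.card_pos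
  have hsq : Fintype.card V * x v ^ 2 = 0 := le_antisymm (by linarith) (by positivity)
  have hxv : x v = 0 := by simpa [hcard.ne'] using hsq
  have hQ'0 : toLinearMap₂' ℝ ((G.induce {u | u ≠ v}).lapMatrix ℝ)
      (fun u => x u) (fun u => x u) = 0 := by linarith
  rw [lapMatrix_toLinearMap₂'_apply'_eq_zero_iff_forall_reachable] at hQ'0
  obtain ⟨w⟩ := hconn.nonempty
  -- `x` vanishes at `v` and is constant off `v`, so `∑ x² = x w * ∑ x = 0`.
  have hconst (u : V) : x u * x u = x w * x u := by
    by_cases hu : u = v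
    · simp [hu, hxv]
    · rw [hQ'0 ⟨u, hu⟩ w (hconn.preconnected _ _)]
  have : ∑ u, x u ^ 2 = 0 := by simp only [sq, hconst, ← mul_sum, hx.1, mul_zero]
  linarith [hx.2]

end SimpleGraph

theorem exists_forall_adj_of_dominationNumber_eq_one {V : Type*} [Fintype V] {G : SimpleGraph V}
    (h : dominationNumber G = 1) : ∃ v, ∀ u, u ≠ v → G.Adj v u := by
  have hmem : dominationNumber G ∈ {k | ∃ S : Finset V, #S = k ∧ ∀ v ∉ S, ∃ u ∈ S, G.Adj u v} :=
    Nat.sInf_mem ⟨_, univ, rfl, fun v hv => absurd (mem_univ v) hv⟩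
  rw [h] at hmem
  obtain ⟨S, hS, hdom⟩ := hmem
  obtain ⟨v, rfl⟩ := card_eq_one.mp hS
  exact ⟨v, fun u hu => by simpa using hdom u (by simpa using hu)⟩

theorem algConn_ge_one_of_dominationNumber_one_general {V : Type*} [Fintype V] [DecidableEq V]
    (G : SimpleGraph V) (hn : 3 ≤ Fintype.card V)
    (hdom : dominationNumber G = 1) :
    1 ≤ algConn G ∧
      (algConn G = 1 ↔
        ∃ v : V, ¬ (G.induce {u : V | u ≠ v}).Connected ∧ ∀ u : V, u ≠ v → G.Adj v u) := by
  classical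
  have : Nontrivial V := Fintype.one_lt_card_iff_nontrivial.mp (by omega)
  obtain ⟨v, hv⟩ := exists_forall_adj_of_dominationNumber_eq_one hdom
  have hge := G.one_le_algConn_of_forall_adj hv
  refine ⟨hge, fun h => ⟨v, fun hconn => ?_, hv⟩, fun ⟨w, hw, _⟩ => ?_⟩
  · exact (G.one_lt_algConn_of_forall_adj hv hconn).ne' h
  · exact (G.algConn_le_one_of_not_connected_induce w hw).antisymm hge

/-- a connected graph `G` of order `n ≥ 3` with domination number `1`
satisfies `α(G) ≥ 1`, with equality iff `G` has a cut vertex adjacent to all other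
vertices. -/
theorem algConn_ge_one_of_dominationNumber_one {V : Type*} [Fintype V] [DecidableEq V]
    (G : SimpleGraph V) (hn : 3 ≤ Fintype.card V) (hG : G.Connected)
    (hdom : dominationNumber G = 1) :
    1 ≤ algConn G ∧
      (algConn G = 1 ↔
        ∃ v : V, ¬ (G.induce {u : V | u ≠ v}).Connected ∧ ∀ u : V, u ≠ v → G.Adj v u) :=
  algConn_ge_one_of_dominationNumber_one_general G hn hdom
end
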